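/- Let α be a real number and set c = cosh(α), s = sinh(α). Let K₁ = [[−i·c, c],[i·s, s]] and K₂ = [[i·s, s],[−i·c, c]] be 2×2 complex matrices. Then the entrywise imaginary part of K₂†K₁ is the 2×2 zero matrix. Moreover, letting K be the 2×4 complex matrix whose columns, in order, are the first column of K₁, the first column of K₂, the second column of K₁, and the second column of K₂, one has Σ·Im(K†K) = −I₄ and Σ·Re(K†K)·Σᵀ = 2V, where Σ = [[0, I₂],[−I₂, 0]] and V = (1/2)[[cosh 2α, sinh 2α, 0, 0],[sinh 2α, cosh 2α, 0, 0],[0, 0, cosh 2α, −sinh 2α],[0, 0, −sinh 2α, cosh 2α]]. -/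

import Mathlib

/-!
With c = cosh α and s = sinh α, the identities c² − s² = 1, c² + s² = cosh 2α and
2sc = sinh 2α turn both Gram matrices into a real part plus `I` times a real part:
K₂†K₁ = diag(−sinh 2α, sinh 2α) is real, and K†K = R + iΣ with
R = diag([[cosh 2α, −sinh 2α], [−sinh 2α, cosh 2α]], [[cosh 2α, sinh 2α], [sinh 2α, cosh 2α]]).
Then Σ·Im(K†K) = Σ² = −I₄, and conjugating the block-diagonal R by Σ swaps its blocks, giving 2V.
-/

open Matrix

noncomputable section

def K1 (α : ℝ) : Matrix (Fin 2) (Fin 2) ℂ :=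
  !![-Complex.I * (Real.cosh α : ℂ), (Real.cosh α : ℂ);
     Complex.I * (Real.sinh α : ℂ), (Real.sinh α : ℂ)]

def K2 (α : ℝ) : Matrix (Fin 2) (Fin 2) ℂ :=
  !![Complex.I * (Real.sinh α : ℂ), (Real.sinh α : ℂ);
     -Complex.I * (Real.cosh α : ℂ), (Real.cosh α : ℂ)]

/-- The 2×4 matrix whose columns are, in order, the first column of K₁, the first
column of K₂, the second column of K₁ and the second column of K₂. -/
def Kfull (α : ℝ) : Matrix (Fin 2) (Fin 4) ℂ :=
  Matrix.of fun i j =>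
    if j = 0 then K1 α i 0
    else if j = 1 then K2 α i 0
    else if j = 2 then K1 α i 1
    else K2 α i 1

/-- The 4×4 symplectic matrix Σ = [[0, I₂],[−I₂, 0]]. -/
def sympJ4 : Matrix (Fin 4) (Fin 4) ℝ :=
  !![0, 0, 1, 0;
     0, 0, 0, 1;
     -1, 0, 0, 0;
     0, -1, 0, 0]

/-- The covariance matrix of the two-mode squeezed state with squeezing parameter α. -/
def twoModeCov (α : ℝ) : Matrix (Fin 4) (Fin 4) ℝ :=
  (1/2 : ℝ) • !![Real.cosh (2*α), Real.sinh (2*α), 0, 0;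
                 Real.sinh (2*α), Real.cosh (2*α), 0, 0;
                 0, 0, Real.cosh (2*α), -Real.sinh (2*α);
                 0, 0, -Real.sinh (2*α), Real.cosh (2*α)]

namespace Matrix

variable {m n : Type*}

@[simp]
lemma map_re_map_ofReal_add_I_smul (A B : Matrix m n ℝ) :
    (A.map ((↑) : ℝ → ℂ) + Complex.I • B.map ((↑) : ℝ → ℂ)).map Complex.re = A := by
  ext i j; simp

@[simp]
lemma map_im_map_ofReal_add_I_smul (A B : Matrix m n ℝ) :
    (A.map ((↑) : ℝ → ℂ) + Complex.I • B.map ((↑) : ℝ → ℂ)).map Complex.im = B := by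
  ext i j; simp

end Matrix

def KfullGramRe (α : ℝ) : Matrix (Fin 4) (Fin 4) ℝ :=
  !![Real.cosh (2 * α), -Real.sinh (2 * α), 0, 0;
     -Real.sinh (2 * α), Real.cosh (2 * α), 0, 0;
     0, 0, Real.cosh (2 * α), Real.sinh (2 * α);
     0, 0, Real.sinh (2 * α), Real.cosh (2 * α)]

lemma conjTranspose_K2_mul_K1 (α : ℝ) :
    (K2 α)ᴴ * K1 α = (!![-Real.sinh (2 * α), 0; 0, Real.sinh (2 * α)]).map ((↑) : ℝ → ℂ) := by
  rw [Real.sinh_two_mul, K1, K2]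
  generalize Real.cosh α = c
  generalize Real.sinh α = s
  ext i j
  fin_cases i <;> fin_cases j <;> simp [mul_apply, Fin.sum_univ_succ] <;> grind [Complex.I_sq]

lemma conjTranspose_Kfull_mul_Kfull (α : ℝ) :
    (Kfull α)ᴴ * Kfull α =
      (KfullGramRe α).map ((↑) : ℝ → ℂ) + Complex.I • sympJ4.map ((↑) : ℝ → ℂ) := by
  have hpyth : (Real.cosh α : ℂ) ^ 2 - (Real.sinh α : ℂ) ^ 2 = 1 := by
    exact_mod_cast Real.cosh_sq_sub_sinh_sq α
  rw [KfullGramRe, Real.sinh_two_mul, Real.cosh_two_mul]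
  simp only [Kfull, K1, K2]
  generalize Real.cosh α = c at hpyth ⊢
  generalize Real.sinh α = s at hpyth ⊢
  ext i j
  fin_cases i <;> fin_cases j <;> simp [sympJ4, mul_apply, Fin.sum_univ_succ] <;>
    grind [Complex.I_sq]

lemma sympJ4_mul_self : sympJ4 * sympJ4 = -1 := by
  ext i j
  fin_cases i <;> fin_cases j <;> simp [sympJ4, mul_apply, Fin.sum_univ_succ, one_apply]

lemma sympJ4_mul_KfullGramRe_mul_transpose (α : ℝ) :
    sympJ4 * KfullGramRe α * sympJ4ᵀ = (2 : ℝ) • twoModeCov α := by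
  ext i j
  fin_cases i <;> fin_cases j <;>
    simp [sympJ4, KfullGramRe, twoModeCov, mul_apply, Fin.sum_univ_succ]

theorem second_realization_two_mode_squeezed (α : ℝ) :
    ((K2 α)ᴴ * K1 α).map Complex.im = 0 ∧
    sympJ4 * ((Kfull α)ᴴ * Kfull α).map Complex.im = -1 ∧
    sympJ4 * ((Kfull α)ᴴ * Kfull α).map Complex.re * sympJ4ᵀ = (2 : ℝ) • twoModeCov α := by
  refine ⟨?_, ?_, ?_⟩
  · ext i j
    simp [conjTranspose_K2_mul_K1]
  · rw [conjTranspose_Kfull_mul_Kfull, Matrix.map_im_map_ofReal_add_I_smul, sympJ4_mul_self]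
  · rw [conjTranspose_Kfull_mul_Kfull, Matrix.map_re_map_ofReal_add_I_smul,
      sympJ4_mul_KfullGramRe_mul_transpose]
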